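/- arXiv:1912.12790 — 3 statements merged into one kernel-verified Lean document; each statement's English description precedes it below -/
import Mathlib

section
/- Let G=(V,E) be a twinless strongly connected directed graph, and let B₁ and B₂ be two distinct 2-twinless blocks of G. Then |B₁ ∩ B₂| ≤ 1, i.e., B₁ and B₂ share at most one vertex. -/
/-- A directed graph on vertex type `V` is given by its edge relation `E`.
`restrictEdges E S` is the edge relation of the subgraph induced on `S`. -/
def restrictEdges {V : Type*} (E : V → V → Prop) (S : Set V) : V → V → Prop :=
  fun a b => E a b ∧ a ∈ S ∧ b ∈ S

/-- The induced subgraph on `S` is strongly connected: every vertex of `S` reaches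
every vertex of `S` by a directed path staying inside `S`. -/
def StronglyConnectedOn {V : Type*} (E : V → V → Prop) (S : Set V) : Prop :=
  ∀ ⦃x⦄, x ∈ S → ∀ ⦃y⦄, y ∈ S → Relation.ReflTransGen (restrictEdges E S) x y

/-- The induced subgraph on `S` is twinless strongly connected: it has a strongly
connected spanning subgraph (edge set `E'` inside `S`) with no pair of antiparallel
edges (if `(x, y) ∈ E'` then `(y, x) ∉ E'`). -/
def TwinlessSCOn {V : Type*} (E : V → V → Prop) (S : Set V) : Prop :=
  ∃ E' : V → V → Prop,
    (∀ a b, E' a b → E a b ∧ a ∈ S ∧ b ∈ S) ∧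
    (∀ a b, E' a b → ¬ E' b a) ∧
    StronglyConnectedOn E' S

/-- `C` is a strongly connected component of the subgraph induced on `S`:
a maximal subset of `S` whose induced subgraph is strongly connected. -/
def IsSCCWithin {V : Type*} (E : V → V → Prop) (S C : Set V) : Prop :=
  C ⊆ S ∧ StronglyConnectedOn E C ∧
    ∀ D : Set V, C ⊆ D → D ⊆ S → StronglyConnectedOn E D → D = C

/-- `C` is a twinless strongly connected component of the subgraph induced on `S`:
a maximal subset of `S` whose induced subgraph is twinless strongly connected. -/
def IsTSCCWithin {V : Type*} (E : V → V → Prop) (S C : Set V) : Prop :=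
  C ⊆ S ∧ TwinlessSCOn E C ∧
    ∀ D : Set V, C ⊆ D → D ⊆ S → TwinlessSCOn E D → D = C

/-- `x` and `y` lie in the same twinless strongly connected component of the
subgraph induced on `S`. -/
def SameTSCC {V : Type*} (E : V → V → Prop) (S : Set V) (x y : V) : Prop :=
  ∃ C : Set V, IsTSCCWithin E S C ∧ x ∈ C ∧ y ∈ C

/-- `x` and `y` lie in the same strongly connected component of the
subgraph induced on `S`. -/
def SameSCC {V : Type*} (E : V → V → Prop) (S : Set V) (x y : V) : Prop :=
  ∃ C : Set V, IsSCCWithin E S C ∧ x ∈ C ∧ y ∈ C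

/-- The relation `x ≈ y` ("x 2t-related to y"): `x` and `y` are distinct and, for every
vertex `w ∉ {x, y}`, the vertices `x, y` lie in the same twinless strongly connected
component of `G ∖ {w}`. -/
def Rel2t {V : Type*} (E : V → V → Prop) (x y : V) : Prop :=
  x ≠ y ∧ ∀ w : V, w ≠ x → w ≠ y → SameTSCC E (({w} : Set V)ᶜ) x y

/-- `x` and `y` are distinct and, for every vertex `w ∉ {x, y}`, the vertices `x, y`
lie in the same strongly connected component of `G ∖ {w}`. -/
def Rel2s {V : Type*} (E : V → V → Prop) (x y : V) : Prop :=
  x ≠ y ∧ ∀ w : V, w ≠ x → w ≠ y → SameSCC E (({w} : Set V)ᶜ) x y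

/-- A 2-twinless block: a maximal set `B` with `|B| ≥ 2` such that `x ≈ y`
for all distinct `x, y ∈ B`. -/
def Is2TwinlessBlock {V : Type*} (E : V → V → Prop) (B : Set V) : Prop :=
  B.Nontrivial ∧ (∀ ⦃x⦄, x ∈ B → ∀ ⦃y⦄, y ∈ B → x ≠ y → Rel2t E x y) ∧
    ∀ D : Set V, B ⊆ D → (∀ ⦃x⦄, x ∈ D → ∀ ⦃y⦄, y ∈ D → x ≠ y → Rel2t E x y) → D = B

/-- A 2-strong block: a maximal set `B` with `|B| ≥ 2` such that for all distinct
`x, y ∈ B` and every `u ∉ {x, y}`, the vertices `x, y` lie in the same strongly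
connected component of `G ∖ {u}`. -/
def Is2StrongBlock {V : Type*} (E : V → V → Prop) (B : Set V) : Prop :=
  B.Nontrivial ∧ (∀ ⦃x⦄, x ∈ B → ∀ ⦃y⦄, y ∈ B → x ≠ y → Rel2s E x y) ∧
    ∀ D : Set V, B ⊆ D → (∀ ⦃x⦄, x ∈ D → ∀ ⦃y⦄, y ∈ D → x ≠ y → Rel2s E x y) → D = B

/-- A twinless articulation point: a vertex whose removal increases the number of
twinless strongly connected components. -/
def IsTwinlessArticulationPoint {V : Type*} (E : V → V → Prop) (v : V) : Prop :=
  ({C : Set V | IsTSCCWithin E Set.univ C}).ncard <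
    ({C : Set V | IsTSCCWithin E (({v} : Set V)ᶜ) C}).ncard

/-! If two blocks shared two vertices `x ≠ y`, then for every removed vertex `w` one of `x, y`
survives, and it links any vertex of the first block to any vertex of the second inside one
twinless strongly connected component of `G ∖ {w}`: these components are equivalence classes,
because two twinless strongly connected subgraphs sharing a vertex have a twinless strongly
connected union. So the union of the blocks is again pairwise `≈`-related, and maximality makes
the two blocks equal. -/

namespace TwinlessSCOn

variable {V : Type*} {ES ET : V → V → Prop} {S T : Set V}

def merge (ES ET : V → V → Prop) (a b : V) : Prop :=
  ES a b ∨ (ET a b ∧ ¬ ES b a)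

lemma merge_asymm (hES : ∀ a b, ES a b → ¬ ES b a) (hET : ∀ a b, ET a b → ¬ ET b a) :
    ∀ a b, merge ES ET a b → ¬ merge ES ET b a := by
  rintro a b (h | ⟨h, hn⟩) (h' | ⟨h', hn'⟩)
  exacts [hES a b h h', hn' h, hn h', hET a b h h']

lemma reflTransGen_merge_of_left {x y : V} (h : Relation.ReflTransGen (restrictEdges ES S) x y) :
    Relation.ReflTransGen (restrictEdges (merge ES ET) (S ∪ T)) x y :=
  Relation.ReflTransGen.mono (fun _ _ ⟨hab, ha, hb⟩ => ⟨Or.inl hab, Or.inl ha, Or.inl hb⟩) _ _ h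

/-- A dropped edge `b → c` of `ET` is replaced by a path from `b` to `c` in `ES`, which exists
since its reverse `c → b` is an `ES`-edge and `ES` is strongly connected on `S`. -/
lemma reflTransGen_merge_of_right (hES : ∀ a b, ES a b → a ∈ S ∧ b ∈ S)
    (hESc : StronglyConnectedOn ES S) {x y : V}
    (h : Relation.ReflTransGen (restrictEdges ET T) x y) :
    Relation.ReflTransGen (restrictEdges (merge ES ET) (S ∪ T)) x y := by
  induction h with
  | refl => exact .refl
  | @tail b c _ hbc ih =>
    obtain ⟨hbc, hb, hc⟩ := hbc
    by_cases hcb : ES c b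
    · obtain ⟨hcS, hbS⟩ := hES c b hcb
      exact ih.trans (reflTransGen_merge_of_left (hESc hbS hcS))
    · exact ih.tail ⟨Or.inr ⟨hbc, hcb⟩, Or.inr hb, Or.inr hc⟩

variable {E : V → V → Prop}

lemma union (hS : TwinlessSCOn E S) (hT : TwinlessSCOn E T) {v : V} (hvS : v ∈ S)
    (hvT : v ∈ T) : TwinlessSCOn E (S ∪ T) := by
  obtain ⟨ES, hES, hESa, hESc⟩ := hS
  obtain ⟨ET, hET, hETa, hETc⟩ := hT
  have hESS : ∀ a b, ES a b → a ∈ S ∧ b ∈ S := fun a b h => (hES a b h).2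
  have reach : ∀ ⦃x y⦄, (x ∈ S ∧ y ∈ S) ∨ (x ∈ T ∧ y ∈ T) →
      Relation.ReflTransGen (restrictEdges (merge ES ET) (S ∪ T)) x y := by
    rintro x y (⟨hx, hy⟩ | ⟨hx, hy⟩)
    exacts [reflTransGen_merge_of_left (hESc hx hy),
      reflTransGen_merge_of_right hESS hESc (hETc hx hy)]
  refine ⟨merge ES ET, ?_, merge_asymm hESa hETa, fun x hx y hy => ?_⟩
  · rintro a b (h | ⟨h, -⟩)
    · exact ⟨(hES a b h).1, Or.inl (hES a b h).2.1, Or.inl (hES a b h).2.2⟩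
    · exact ⟨(hET a b h).1, Or.inr (hET a b h).2.1, Or.inr (hET a b h).2.2⟩
  · have to_v : Relation.ReflTransGen _ x v := reach (hx.imp (⟨·, hvS⟩) (⟨·, hvT⟩))
    exact to_v.trans (reach (hy.imp (⟨hvS, ·⟩) (⟨hvT, ·⟩)))

end TwinlessSCOn

section

variable {V : Type*} {E : V → V → Prop}

lemma IsTSCCWithin.eq_of_mem {S C₁ C₂ : Set V} (h₁ : IsTSCCWithin E S C₁)
    (h₂ : IsTSCCWithin E S C₂) {v : V} (hv₁ : v ∈ C₁) (hv₂ : v ∈ C₂) : C₁ = C₂ := by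
  have hU := h₁.2.1.union h₂.2.1 hv₁ hv₂
  have hUS := Set.union_subset h₁.1 h₂.1
  rw [← h₁.2.2 _ Set.subset_union_left hUS hU, h₂.2.2 _ Set.subset_union_right hUS hU]

lemma SameTSCC.trans {S : Set V} {x y z : V} (h₁ : SameTSCC E S x y) (h₂ : SameTSCC E S y z) :
    SameTSCC E S x z := by
  obtain ⟨C₁, hC₁, hx, hy⟩ := h₁
  obtain ⟨C₂, hC₂, hy', hz⟩ := h₂
  exact ⟨C₁, hC₁, hx, hC₁.eq_of_mem hC₂ hy hy' ▸ hz⟩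

lemma rel2t_of_mem_of_mem_of_nontrivial_inter {B₁ B₂ : Set V} (hB₁ : B₁.Pairwise (Rel2t E))
    (hB₂ : B₂.Pairwise (Rel2t E)) (hB : (B₁ ∩ B₂).Nontrivial) {a b : V} (ha : a ∈ B₁)
    (hb : b ∈ B₂) (hab : a ≠ b) : Rel2t E a b := by
  refine ⟨hab, fun w hwa hwb => ?_⟩
  obtain ⟨z, ⟨hz₁, hz₂⟩, hzw⟩ := hB.exists_ne w
  by_cases hza : a = z
  · exact (hB₂ (hza ▸ hz₂) hb hab).2 w hwa hwb
  by_cases hzb : z = b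
  · exact (hB₁ ha (hzb ▸ hz₁) hab).2 w hwa hwb
  exact ((hB₁ ha hz₁ hza).2 w hwa hzw.symm).trans ((hB₂ hz₂ hb hzb).2 w hzw.symm hwb)

lemma pairwise_rel2t_union_of_nontrivial_inter {B₁ B₂ : Set V} (hB₁ : B₁.Pairwise (Rel2t E))
    (hB₂ : B₂.Pairwise (Rel2t E)) (hB : (B₁ ∩ B₂).Nontrivial) :
    (B₁ ∪ B₂).Pairwise (Rel2t E) :=
  Set.pairwise_union.2 ⟨hB₁, hB₂, fun _ ha _ hb hab =>
    ⟨rel2t_of_mem_of_mem_of_nontrivial_inter hB₁ hB₂ hB ha hb hab,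
      rel2t_of_mem_of_mem_of_nontrivial_inter hB₂ hB₁ (Set.inter_comm B₁ B₂ ▸ hB) hb ha hab.symm⟩⟩

lemma Is2TwinlessBlock.eq_of_nontrivial_inter {B₁ B₂ : Set V} (hB₁ : Is2TwinlessBlock E B₁)
    (hB₂ : Is2TwinlessBlock E B₂) (hB : (B₁ ∩ B₂).Nontrivial) : B₁ = B₂ := by
  have hU := pairwise_rel2t_union_of_nontrivial_inter hB₁.2.1 hB₂.2.1 hB
  rw [← hB₁.2.2 _ Set.subset_union_left hU, hB₂.2.2 _ Set.subset_union_right hU]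

end

theorem two_twinless_blocks_intersect_in_at_most_one_vertex_general
    {V : Type*} (E : V → V → Prop)
    (B₁ B₂ : Set V) (hB₁ : Is2TwinlessBlock E B₁) (hB₂ : Is2TwinlessBlock E B₂)
    (hne : B₁ ≠ B₂) :
    (B₁ ∩ B₂).ncard ≤ 1 := by
  by_contra! hcard
  exact hne (hB₁.eq_of_nontrivial_inter hB₂ (Set.one_lt_ncard_iff_nontrivial_and_finite.1 hcard).1)

/-- Two distinct 2-twinless blocks of a twinless strongly connected directed graph
share at most one vertex. -/
theorem two_twinless_blocks_intersect_in_at_most_one_vertex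
    {V : Type*} [Fintype V] (E : V → V → Prop)
    (hG : TwinlessSCOn E Set.univ)
    (B₁ B₂ : Set V) (hB₁ : Is2TwinlessBlock E B₁) (hB₂ : Is2TwinlessBlock E B₂)
    (hne : B₁ ≠ B₂) :
    (B₁ ∩ B₂).ncard ≤ 1 :=
  two_twinless_blocks_intersect_in_at_most_one_vertex_general E B₁ B₂ hB₁ hB₂ hne
end

section
/- Let G=(V,E) be a twinless strongly connected directed graph and let x, y be distinct vertices of G. Then x ≈ y if and only if for every twinless articulation point z of G with z ∈ V∖{x,y}, the vertices x and y lie in the same twinless strongly connected component of G∖{z}. -/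
/-! A vertex that is not a twinless articulation point of a twinless strongly connected graph
leaves at most one twinless strongly connected component behind, and in a finite graph every
vertex lies in some component; so only articulation points can separate `x` from `y`. -/

lemma twinlessSCOn_singleton {V : Type*} (E : V → V → Prop) (v : V) :
    TwinlessSCOn E {v} := by
  refine ⟨fun _ _ => False, by simp, by simp, ?_⟩
  rintro a rfl b rfl
  exact Relation.ReflTransGen.refl

lemma exists_isTSCCWithin_mem {V : Type*} [Finite V] (E : V → V → Prop) {S : Set V} {v : V}
    (hv : v ∈ S) : ∃ C : Set V, IsTSCCWithin E S C ∧ v ∈ C := by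
  let candidates := {D : Set V | v ∈ D ∧ D ⊆ S ∧ TwinlessSCOn E D}
  have hne : candidates.Nonempty :=
    ⟨{v}, rfl, Set.singleton_subset_iff.mpr hv, twinlessSCOn_singleton E v⟩
  obtain ⟨C, ⟨hvC, hCS, hC⟩, hmax⟩ := (Set.toFinite candidates).exists_maximalFor id _ hne
  exact ⟨C, ⟨hCS, hC, fun D hCD hDS hD =>
    (hmax ⟨hCD hvC, hDS, hD⟩ hCD).antisymm hCD⟩, hvC⟩

lemma setOf_isTSCCWithin_univ {V : Type*} {E : V → V → Prop} (hG : TwinlessSCOn E Set.univ) :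
    {C : Set V | IsTSCCWithin E Set.univ C} = {Set.univ} := by
  ext C
  constructor
  · rintro ⟨-, -, hmax⟩
    exact (hmax Set.univ (Set.subset_univ _) subset_rfl hG).symm
  · rintro rfl
    exact ⟨subset_rfl, hG, fun D hD _ _ => (Set.subset_univ D).antisymm hD⟩

lemma sameTSCC_of_ncard_le_one {V : Type*} [Finite V] {E : V → V → Prop} {S : Set V}
    (hS : {C : Set V | IsTSCCWithin E S C}.ncard ≤ 1) {x y : V} (hx : x ∈ S) (hy : y ∈ S) :
    SameTSCC E S x y := by
  obtain ⟨Cx, hCx, hxCx⟩ := exists_isTSCCWithin_mem E hx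
  obtain ⟨Cy, hCy, hyCy⟩ := exists_isTSCCWithin_mem E hy
  have hCxy : Cx = Cy := (Set.ncard_le_one (Set.toFinite _)).mp hS Cx hCx Cy hCy
  exact ⟨Cx, hCx, hxCx, hCxy ▸ hyCy⟩

lemma sameTSCC_compl_of_not_isTwinlessArticulationPoint {V : Type*} [Finite V]
    {E : V → V → Prop} (hG : TwinlessSCOn E Set.univ) {w x y : V}
    (hw : ¬ IsTwinlessArticulationPoint E w) (hwx : w ≠ x) (hwy : w ≠ y) :
    SameTSCC E ({w}ᶜ) x y := by
  rw [IsTwinlessArticulationPoint, setOf_isTSCCWithin_univ hG, Set.ncard_singleton,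
    not_lt] at hw
  exact sameTSCC_of_ncard_le_one hw (Ne.symm hwx) (Ne.symm hwy)

/-- For distinct vertices `x, y` of a twinless strongly connected graph `G`:
`x ≈ y` if and only if for every twinless articulation point `z ∉ {x, y}` of `G`,
the vertices `x` and `y` lie in the same twinless strongly connected component
of `G ∖ {z}`. -/
theorem rel2t_iff_sameTSCC_for_all_twinless_articulation_points
    {V : Type*} [Fintype V] (E : V → V → Prop)
    (hG : TwinlessSCOn E Set.univ)
    (x y : V) (hxy : x ≠ y) :
    Rel2t E x y ↔
      ∀ z : V, IsTwinlessArticulationPoint E z → z ≠ x → z ≠ y →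
        SameTSCC E (({z} : Set V)ᶜ) x y := by
  refine ⟨fun h z _ hzx hzy => h.2 z hzx hzy, fun h => ⟨hxy, fun w hwx hwy => ?_⟩⟩
  by_cases hw : IsTwinlessArticulationPoint E w
  · exact h w hw hwx hwy
  · exact sameTSCC_compl_of_not_isTwinlessArticulationPoint hG hw hwx hwy
end

section
/- Let G=(V,E) be a twinless strongly connected directed graph and let B_t be a 2-twinless block of G. Then B_t is contained in some 2-strong block of G. -/
/-!
A twinless strongly connected spanning subgraph is in particular strongly connected, so every
twinless strongly connected component of `G ∖ {w}` lies inside a strongly connected component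
of `G ∖ {w}`. Hence `x ≈ y` implies the 2-strong relation between `x` and `y`, a 2-twinless
block is a set of pairwise 2-strongly related vertices, and by Zorn's lemma it extends to a
maximal such set, that is, to a 2-strong block.
-/

open Set

section

variable {V : Type*} {E : V → V → Prop}

lemma restrictEdges_mono {E' : V → V → Prop} {S T : Set V} (hE : E ≤ E') (hST : S ⊆ T) :
    restrictEdges E S ≤ restrictEdges E' T :=
  fun _ _ ⟨hab, ha, hb⟩ => ⟨hE _ _ hab, hST ha, hST hb⟩

lemma TwinlessSCOn.stronglyConnectedOn {C : Set V} (h : TwinlessSCOn E C) :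
    StronglyConnectedOn E C := by
  obtain ⟨E', hE'E, -, hE'⟩ := h
  exact fun x hx y hy => Relation.ReflTransGen.mono
    (restrictEdges_mono (fun a b hab => (hE'E a b hab).1) subset_rfl) _ _ (hE' hx hy)

lemma IsChain.stronglyConnectedOn_sUnion {c : Set (Set V)} (hc : IsChain (· ⊆ ·) c)
    (hsc : ∀ C ∈ c, StronglyConnectedOn E C) : StronglyConnectedOn E (⋃₀ c) := by
  rintro x ⟨Cx, hCx, hx⟩ y ⟨Cy, hCy, hy⟩
  have lift {D : Set V} (hD : D ∈ c) : restrictEdges E D ≤ restrictEdges E (⋃₀ c) :=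
    restrictEdges_mono le_rfl (subset_sUnion_of_mem hD)
  rcases hc.total hCx hCy with hxy | hyx
  · exact Relation.ReflTransGen.mono (lift hCy) _ _ (hsc Cy hCy (hxy hx) hy)
  · exact Relation.ReflTransGen.mono (lift hCx) _ _ (hsc Cx hCx hx (hyx hy))

lemma StronglyConnectedOn.exists_isSCCWithin_superset {S C : Set V} (hC : StronglyConnectedOn E C)
    (hCS : C ⊆ S) : ∃ M, IsSCCWithin E S M ∧ C ⊆ M := by
  obtain ⟨M, hCM, hM⟩ := zorn_subset_nonempty {D | D ⊆ S ∧ StronglyConnectedOn E D}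
    (fun c hcS hc _ => ⟨⋃₀ c, ⟨sUnion_subset fun D hD => (hcS hD).1,
      hc.stronglyConnectedOn_sUnion fun D hD => (hcS hD).2⟩, fun _ => subset_sUnion_of_mem⟩)
    C ⟨hCS, hC⟩
  refine ⟨M, ⟨hM.prop.1, hM.prop.2, fun D hMD hDS hD => ?_⟩, hCM⟩
  exact (hM.eq_of_subset ⟨hDS, hD⟩ hMD).symm

lemma SameTSCC.sameSCC {S : Set V} {x y : V} (h : SameTSCC E S x y) : SameSCC E S x y := by
  obtain ⟨C, ⟨hCS, hC, -⟩, hx, hy⟩ := h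
  obtain ⟨M, hM, hCM⟩ := hC.stronglyConnectedOn.exists_isSCCWithin_superset hCS
  exact ⟨M, hM, hCM hx, hCM hy⟩

lemma Rel2t.rel2s {x y : V} (h : Rel2t E x y) : Rel2s E x y :=
  ⟨h.1, fun w hwx hwy => (h.2 w hwx hwy).sameSCC⟩

lemma Set.Pairwise.exists_maximal_superset {r : V → V → Prop} {s : Set V} (h : s.Pairwise r) :
    ∃ m, s ⊆ m ∧ Maximal (·.Pairwise r) m :=
  zorn_subset_nonempty {t | t.Pairwise r}
    (fun c hcr hc _ => ⟨⋃₀ c, hc.pairwise_sUnion.2 hcr, fun _ => subset_sUnion_of_mem⟩) s h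

lemma is2StrongBlock_of_maximal {B : Set V} (hB : B.Nontrivial)
    (hmax : Maximal (·.Pairwise (Rel2s E)) B) : Is2StrongBlock E B :=
  ⟨hB, hmax.prop, fun _ hBD hD => (hmax.eq_of_subset hD hBD).symm⟩

end

theorem two_twinless_block_subset_two_strong_block_general
    {V : Type*} (E : V → V → Prop)
    (Bt : Set V) (hBt : Is2TwinlessBlock E Bt) :
    ∃ Bs : Set V, Is2StrongBlock E Bs ∧ Bt ⊆ Bs := by
  have hrel2s : Bt.Pairwise (Rel2s E) := Set.Pairwise.mono' (fun _ _ => Rel2t.rel2s) hBt.2.1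
  obtain ⟨Bs, hBtBs, hmax⟩ := hrel2s.exists_maximal_superset
  exact ⟨Bs, is2StrongBlock_of_maximal (hBt.1.mono hBtBs) hmax, hBtBs⟩

/-- Every 2-twinless block of a twinless strongly connected directed graph is
contained in some 2-strong block. -/
theorem two_twinless_block_subset_two_strong_block
    {V : Type*} [Fintype V] (E : V → V → Prop)
    (hG : TwinlessSCOn E Set.univ)
    (Bt : Set V) (hBt : Is2TwinlessBlock E Bt) :
    ∃ Bs : Set V, Is2StrongBlock E Bs ∧ Bt ⊆ Bs :=
  two_twinless_block_subset_two_strong_block_general E Bt hBt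
end
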